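/- arXiv:1906.00331 — 2 statements merged into one kernel-verified Lean document; each statement's English description precedes it below -/
import Mathlib

section
/- Under Assumption: f ℓ-smooth, f(x,·) μ-strongly concave on convex Y, GDA with stepsizes η_x = 1/(16(κ+1)²ℓ) and η_y = 1/ℓ satisfies, with δ_t = ‖y*(x_t) − y_t‖² and Φ(x) = max_{y∈Y} f(x,y): Φ(x_t) ≤ Φ(x_{t−1}) − (7η_x/16)‖∇Φ(x_{t−1})‖² + (9η_x ℓ²/16) δ_{t−1}. -/
/-!
Along the maximiser, `Φ x = f x (y* x)`. Strong concavity makes `y*` `κ`-Lipschitz, so for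
`x' = x + d` the smoothness of `f (·, y* x')` and the maximality of `y* x` give the descent
inequality `Φ x' ≤ Φ x + ⟪∇Φ x, d⟫ + (κℓ + ℓ/2) ‖d‖²`, with `∇Φ x = ∇ₓ f (x, y* x)`.
The GDA step moves along `h = ∇ₓ f (x, y)`, whose distance to `∇Φ x` is at most
`ℓ ‖y* x - y‖`; as `(κℓ + ℓ/2) ηₓ ≤ 1/2`, polarising `⟪∇Φ x, h⟫` yields
`Φ x' ≤ Φ x - (ηₓ/2) ‖∇Φ x‖² + (ηₓ/2) ‖h - ∇Φ x‖²`, which implies the claimed bound.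
-/

open Set
open scoped RealInnerProductSpace

theorem IsMaxOn.csSup_image_eq {α : Type*} {f : α → ℝ} {s : Set α} {a : α}
    (h : IsMaxOn f s a) (ha : a ∈ s) : sSup (f '' s) = f a :=
  IsGreatest.csSup_eq ⟨mem_image_of_mem f ha, forall_mem_image.2 h⟩

theorem StrongConcaveOn.add_sq_le_of_isMaxOn {F : Type*} [NormedAddCommGroup F]
    [NormedSpace ℝ F] {Y : Set F} {μ : ℝ} {φ : F → ℝ} (hφ : StrongConcaveOn Y μ φ)
    {y₀ y : F} (hy₀ : y₀ ∈ Y) (hmax : IsMaxOn φ Y y₀) (hy : y ∈ Y) :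
    φ y + μ / 2 * ‖y - y₀‖ ^ 2 ≤ φ y₀ := by
  set c := μ / 2 * ‖y - y₀‖ ^ 2 with hc
  have hsegment : ∀ t ∈ Ioo (0 : ℝ) 1, φ y + (1 - t) * c ≤ φ y₀ := by
    intro t ⟨ht₀, ht₁⟩
    have hconc := hφ.2 hy hy₀ ht₀.le (sub_nonneg.2 ht₁.le) (add_sub_cancel t 1)
    have hle : φ (t • y + (1 - t) • y₀) ≤ φ y₀ :=
      hmax (hφ.1 hy hy₀ ht₀.le (sub_nonneg.2 ht₁.le) (add_sub_cancel t 1))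
    simp only [smul_eq_mul, ← hc] at hconc
    refine le_of_mul_le_mul_left ?_ ht₀
    linarith
  have hclosed : IsClosed {t : ℝ | φ y + (1 - t) * c ≤ φ y₀} :=
    isClosed_le (by fun_prop) continuous_const
  have h₀ : (0 : ℝ) ∈ closure (Ioo 0 1) := by
    rw [closure_Ioo zero_ne_one]; exact ⟨le_rfl, zero_le_one⟩
  simpa using hclosed.closure_subset_iff.2 hsegment h₀

section Gradient

variable {E : Type*} [NormedAddCommGroup E] [InnerProductSpace ℝ E] [CompleteSpace E]

theorem HasGradientAt.hasDerivAt_comp_add_smul {f : E → ℝ} {g a d : E} {s : ℝ}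
    (hf : HasGradientAt f g (a + s • d)) :
    HasDerivAt (fun s : ℝ => f (a + s • d)) ⟪g, d⟫ s := by
  have hline : HasDerivAt (fun s : ℝ => a + s • d) d s := by
    simpa using ((hasDerivAt_id s).smul_const d).const_add a
  exact hf.hasFDerivAt.comp_hasDerivAt s hline

theorem le_add_inner_add_sq_of_lipschitz_gradient {f : E → ℝ} {g : E → E} {ℓ : ℝ}
    (hf : ∀ p, HasGradientAt f (g p) p) (hg : ∀ p q, ‖g p - g q‖ ≤ ℓ * ‖p - q‖) (a d : E) :
    f (a + d) ≤ f a + ⟪g a, d⟫ + ℓ / 2 * ‖d‖ ^ 2 := by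
  set B : ℝ → ℝ := fun s => f a + s * ⟪g a, d⟫ + ℓ / 2 * s ^ 2 * ‖d‖ ^ 2
  have hf' (s : ℝ) := (hf (a + s • d)).hasDerivAt_comp_add_smul
  have hB' (s : ℝ) : HasDerivAt B (⟪g a, d⟫ + ℓ * s * ‖d‖ ^ 2) s := by
    refine ((((hasDerivAt_id' s).mul_const ⟪g a, d⟫).const_add (f a)).fun_add
      (((hasDerivAt_pow 2 s).const_mul (ℓ / 2)).mul_const (‖d‖ ^ 2))).congr_deriv ?_
    push_cast; ring
  have hbound : ∀ s ∈ Ico (0 : ℝ) 1, ⟪g (a + s • d), d⟫ ≤ ⟪g a, d⟫ + ℓ * s * ‖d‖ ^ 2 := by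
    intro s ⟨hs, _⟩
    calc ⟪g (a + s • d), d⟫ = ⟪g a, d⟫ + ⟪g (a + s • d) - g a, d⟫ := by
          rw [inner_sub_left]; ring
      _ ≤ ⟪g a, d⟫ + ‖g (a + s • d) - g a‖ * ‖d‖ := by gcongr; exact real_inner_le_norm _ _
      _ ≤ ⟪g a, d⟫ + ℓ * ‖s • d‖ * ‖d‖ := by gcongr; simpa using hg (a + s • d) a
      _ = ⟪g a, d⟫ + ℓ * s * ‖d‖ ^ 2 := by rw [norm_smul, Real.norm_of_nonneg hs]; ring
  have := image_le_of_deriv_right_le_deriv_boundary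
    (fun s _ => (hf' s).continuousAt.continuousWithinAt) (fun s _ => (hf' s).hasDerivWithinAt)
    (by simp [B]) (fun s _ => (hB' s).continuousAt.continuousWithinAt)
    (fun s _ => (hB' s).hasDerivWithinAt) hbound (right_mem_Icc.2 zero_le_one)
  simpa [B] using this

theorem sub_sub_sub_le_of_norm_gradient_sub_le {f₁ f₂ : E → ℝ} {g₁ g₂ : E → E} {C : ℝ}
    (hf₁ : ∀ p, HasGradientAt f₁ (g₁ p) p) (hf₂ : ∀ p, HasGradientAt f₂ (g₂ p) p)
    (hC : ∀ p, ‖g₁ p - g₂ p‖ ≤ C) (a b : E) :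
    (f₁ b - f₂ b) - (f₁ a - f₂ a) ≤ C * ‖b - a‖ := by
  have hderiv (p : E) : HasFDerivWithinAt (fun p => f₁ p - f₂ p)
      (InnerProductSpace.toDual ℝ E (g₁ p - g₂ p)) univ p := by
    rw [map_sub]
    exact ((hf₁ p).hasFDerivAt.sub (hf₂ p).hasFDerivAt).hasFDerivWithinAt
  have hnorm (p : E) : ‖InnerProductSpace.toDual ℝ E (g₁ p - g₂ p)‖ ≤ C := by
    rw [LinearIsometryEquiv.norm_map]; exact hC p
  exact (le_abs_self _).trans <| (Real.norm_eq_abs _).symm.trans_le <|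
    convex_univ.norm_image_sub_le_of_norm_hasFDerivWithin_le (fun p _ => hderiv p)
      (fun p _ => hnorm p) (mem_univ a) (mem_univ b)

variable {F : Type*} [NormedAddCommGroup F] [InnerProductSpace ℝ F]
  {f : E → F → ℝ} {gx : E → F → E} {Y : Set F} {ℓ μ : ℝ}

theorem norm_sub_le_of_isMaxOn_of_strongConcaveOn (hℓ : 0 ≤ ℓ) (hμ : 0 < μ)
    (hgx : ∀ x y, HasGradientAt (fun x' => f x' y) (gx x y) x)
    (hgx_lip : ∀ x y y', ‖gx x y - gx x y'‖ ≤ ℓ * ‖y - y'‖)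
    (hconc : ∀ x, StrongConcaveOn Y μ (f x)) {a b : E} {ya yb : F}
    (hya : ya ∈ Y) (hyb : yb ∈ Y) (hmaxa : IsMaxOn (f a) Y ya) (hmaxb : IsMaxOn (f b) Y yb) :
    ‖ya - yb‖ ≤ ℓ / μ * ‖a - b‖ := by
  have hgrowtha := (hconc a).add_sq_le_of_isMaxOn hya hmaxa hyb
  have hgrowthb := (hconc b).add_sq_le_of_isMaxOn hyb hmaxb hya
  have hcross : (f a ya - f a yb) - (f b ya - f b yb) ≤ ℓ * ‖ya - yb‖ * ‖a - b‖ :=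
    sub_sub_sub_le_of_norm_gradient_sub_le (fun p => hgx p ya) (fun p => hgx p yb)
      (fun p => hgx_lip p ya yb) b a
  rw [norm_sub_rev yb] at hgrowtha
  rcases (norm_nonneg (ya - yb)).eq_or_lt with h0 | h0
  · rw [← h0]; positivity
  rw [div_mul_eq_mul_div, le_div_iff₀ hμ]
  refine le_of_mul_le_mul_right ?_ h0
  linarith

theorem apply_le_add_inner_add_sq_of_isMaxOn (hℓ : 0 ≤ ℓ) (hμ : 0 < μ)
    (hgx : ∀ x y, HasGradientAt (fun x' => f x' y) (gx x y) x)
    (hgx_lip_x : ∀ x x' y, ‖gx x y - gx x' y‖ ≤ ℓ * ‖x - x'‖)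
    (hgx_lip_y : ∀ x y y', ‖gx x y - gx x y'‖ ≤ ℓ * ‖y - y'‖)
    (hconc : ∀ x, StrongConcaveOn Y μ (f x)) {a b : E} {ya yb : F}
    (hya : ya ∈ Y) (hyb : yb ∈ Y) (hmaxa : IsMaxOn (f a) Y ya) (hmaxb : IsMaxOn (f b) Y yb) :
    f b yb ≤ f a ya + ⟪gx a ya, b - a⟫ + (ℓ * (ℓ / μ) + ℓ / 2) * ‖b - a‖ ^ 2 := by
  have hdescent := le_add_inner_add_sq_of_lipschitz_gradient (fun p => hgx p yb)
    (fun p q => hgx_lip_x p q yb) a (b - a)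
  rw [add_sub_cancel] at hdescent
  have hmax : f a yb ≤ f a ya := hmaxa hyb
  have hshift : ‖yb - ya‖ ≤ ℓ / μ * ‖b - a‖ :=
    norm_sub_le_of_isMaxOn_of_strongConcaveOn hℓ hμ hgx hgx_lip_y hconc hyb hya hmaxb hmaxa
  have hinner : ⟪gx a yb, b - a⟫ ≤ ⟪gx a ya, b - a⟫ + ℓ * (ℓ / μ) * ‖b - a‖ ^ 2 :=
    calc ⟪gx a yb, b - a⟫ = ⟪gx a ya, b - a⟫ + ⟪gx a yb - gx a ya, b - a⟫ := by
          rw [inner_sub_left]; ring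
      _ ≤ ⟪gx a ya, b - a⟫ + ‖gx a yb - gx a ya‖ * ‖b - a‖ := by
          gcongr; exact real_inner_le_norm _ _
      _ ≤ ⟪gx a ya, b - a⟫ + ℓ * (ℓ / μ * ‖b - a‖) * ‖b - a‖ := by
          gcongr; exact (hgx_lip_y a yb ya).trans (by gcongr)
      _ = ⟪gx a ya, b - a⟫ + ℓ * (ℓ / μ) * ‖b - a‖ ^ 2 := by ring
  linarith

end Gradient

theorem inner_add_mul_norm_sq_le_of_eq_neg_smul {E : Type*} [NormedAddCommGroup E]
    [InnerProductSpace ℝ E] {g h d : E} {η L : ℝ} (hd : d = -(η • h)) (hη : 0 ≤ η)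
    (hLη : L * η ≤ 1 / 2) :
    ⟪g, d⟫ + L * ‖d‖ ^ 2 ≤ -(η / 2) * ‖g‖ ^ 2 + η / 2 * ‖h - g‖ ^ 2 := by
  have hpolar : ‖h - g‖ ^ 2 = ‖h‖ ^ 2 - 2 * ⟪g, h⟫ + ‖g‖ ^ 2 := by
    rw [norm_sub_sq_real, real_inner_comm]
  have hstep : L * η * (η * ‖h‖ ^ 2) ≤ 1 / 2 * (η * ‖h‖ ^ 2) := by gcongr
  rw [hd, inner_neg_right, real_inner_smul_right, norm_neg, norm_smul, Real.norm_of_nonneg hη]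
  linear_combination hstep - η / 2 * hpolar

theorem statement10_general {m n : ℕ} (f : EuclideanSpace ℝ (Fin m) → EuclideanSpace ℝ (Fin n) → ℝ)
    (ℓ μ ηx : ℝ) (hℓ : 0 < ℓ) (hμ : 0 < μ)
    (hηx : ηx = 1 / (16 * (ℓ / μ + 1) ^ 2 * ℓ))
    (Y : Set (EuclideanSpace ℝ (Fin n)))
    (gx : EuclideanSpace ℝ (Fin m) → EuclideanSpace ℝ (Fin n) → EuclideanSpace ℝ (Fin m))
    (gy : EuclideanSpace ℝ (Fin m) → EuclideanSpace ℝ (Fin n) → EuclideanSpace ℝ (Fin n))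
    (hgx : ∀ x y, HasGradientAt (fun x' => f x' y) (gx x y) x)
    (hsmooth : ∀ x x' y y',
      ‖gx x y - gx x' y'‖ ≤ ℓ * (‖x - x'‖ + ‖y - y'‖) ∧
      ‖gy x y - gy x' y'‖ ≤ ℓ * (‖x - x'‖ + ‖y - y'‖))
    (hconc : ∀ x, StrongConcaveOn Y μ (f x))
    (ystar : EuclideanSpace ℝ (Fin m) → EuclideanSpace ℝ (Fin n))
    (hystar : ∀ x, ystar x ∈ Y ∧ IsMaxOn (f x) Y (ystar x))
    (Φ : EuclideanSpace ℝ (Fin m) → ℝ) (hΦ : ∀ x, Φ x = sSup (f x '' Y))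
    (x : ℕ → EuclideanSpace ℝ (Fin m)) (y : ℕ → EuclideanSpace ℝ (Fin n))
    (hxupd : ∀ t, x (t + 1) = x t - ηx • gx (x t) (y t)) :
    ∀ t, Φ (x (t + 1)) ≤ Φ (x t) - (7 * ηx / 16) * ‖gx (x t) (ystar (x t))‖ ^ 2
        + (9 * ηx * ℓ ^ 2 / 16) * ‖ystar (x t) - y t‖ ^ 2 := by
  intro t
  have hΦeq (p) : Φ p = f p (ystar p) := (hΦ p).trans ((hystar p).2.csSup_image_eq (hystar p).1)
  have hκ : 0 ≤ ℓ / μ := by positivity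
  have hη : 0 < ηx := by rw [hηx]; positivity
  have hLη : (ℓ * (ℓ / μ) + ℓ / 2) * ηx ≤ 1 / 2 := by
    rw [hηx, mul_one_div, div_le_iff₀ (by positivity)]
    nlinarith [mul_nonneg hκ hℓ.le, mul_nonneg (mul_nonneg hκ hκ) hℓ.le]
  have hdescent := apply_le_add_inner_add_sq_of_isMaxOn hℓ.le hμ hgx
    (fun p q y => by simpa using (hsmooth p q y y).1)
    (fun p y y' => by simpa using (hsmooth p p y y').1)
    hconc (hystar (x t)).1 (hystar (x (t + 1))).1 (hystar (x t)).2 (hystar (x (t + 1))).2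
  have hstep : x (t + 1) - x t = -(ηx • gx (x t) (y t)) := by rw [hxupd t]; abel
  set g := gx (x t) (ystar (x t))
  set h := gx (x t) (y t)
  have herror : ‖h - g‖ ≤ ℓ * ‖ystar (x t) - y t‖ := by
    simpa [norm_sub_rev (y t)] using (hsmooth (x t) (x t) (y t) (ystar (x t))).1
  have herror_sq : ηx * ‖h - g‖ ^ 2 ≤ ηx * (ℓ ^ 2 * ‖ystar (x t) - y t‖ ^ 2) := by
    rw [← mul_pow]; gcongr
  have hinexact := inner_add_mul_norm_sq_le_of_eq_neg_smul (g := g) hstep hη.le hLη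
  have hg_sq : 0 ≤ ηx * ‖g‖ ^ 2 := by positivity
  have hδ : 0 ≤ ηx * (ℓ ^ 2 * ‖ystar (x t) - y t‖ ^ 2) := by positivity
  rw [hΦeq, hΦeq]
  linarith

/-- Descent inequality for two-time-scale GDA with stepsizes
`η_x = 1/(16(κ+1)²ℓ)`, `η_y = 1/ℓ`, `κ = ℓ/μ`: with `δ_t = ‖y*(x_t) − y_t‖²` and
`Φ(x) = max_{y∈Y} f x y`,
`Φ(x_t) ≤ Φ(x_{t−1}) − (7η_x/16)‖∇Φ(x_{t−1})‖² + (9η_x ℓ²/16) δ_{t−1}`. -/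
theorem statement10 {m n : ℕ} (f : EuclideanSpace ℝ (Fin m) → EuclideanSpace ℝ (Fin n) → ℝ)
    (ℓ μ ηx : ℝ) (hℓ : 0 < ℓ) (hμ : 0 < μ) (hκ : 1 ≤ ℓ / μ)
    (hηx : ηx = 1 / (16 * (ℓ / μ + 1) ^ 2 * ℓ))
    (Y : Set (EuclideanSpace ℝ (Fin n))) (hYconv : Convex ℝ Y) (hYclosed : IsClosed Y)
    (hYbdd : Bornology.IsBounded Y) (hYne : Y.Nonempty)
    (gx : EuclideanSpace ℝ (Fin m) → EuclideanSpace ℝ (Fin n) → EuclideanSpace ℝ (Fin m))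
    (gy : EuclideanSpace ℝ (Fin m) → EuclideanSpace ℝ (Fin n) → EuclideanSpace ℝ (Fin n))
    (hgx : ∀ x y, HasGradientAt (fun x' => f x' y) (gx x y) x)
    (hgy : ∀ x y, HasGradientAt (fun y' => f x y') (gy x y) y)
    (hsmooth : ∀ x x' y y',
      ‖gx x y - gx x' y'‖ ≤ ℓ * (‖x - x'‖ + ‖y - y'‖) ∧
      ‖gy x y - gy x' y'‖ ≤ ℓ * (‖x - x'‖ + ‖y - y'‖))
    (hconc : ∀ x, StrongConcaveOn Y μ (f x))
    (P : EuclideanSpace ℝ (Fin n) → EuclideanSpace ℝ (Fin n))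
    (hP : ∀ z, P z ∈ Y ∧ ∀ y ∈ Y, ⟪z - P z, y - P z⟫ ≤ 0)
    (ystar : EuclideanSpace ℝ (Fin m) → EuclideanSpace ℝ (Fin n))
    (hystar : ∀ x, ystar x ∈ Y ∧ IsMaxOn (f x) Y (ystar x))
    (Φ : EuclideanSpace ℝ (Fin m) → ℝ) (hΦ : ∀ x, Φ x = sSup (f x '' Y))
    (x : ℕ → EuclideanSpace ℝ (Fin m)) (y : ℕ → EuclideanSpace ℝ (Fin n))
    (hy0 : y 0 ∈ Y)
    (hxupd : ∀ t, x (t + 1) = x t - ηx • gx (x t) (y t))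
    (hyupd : ∀ t, y (t + 1) = P (y t + (1 / ℓ) • gy (x t) (y t))) :
    ∀ t, Φ (x (t + 1)) ≤ Φ (x t) - (7 * ηx / 16) * ‖gx (x t) (ystar (x t))‖ ^ 2
        + (9 * ηx * ℓ ^ 2 / 16) * ‖ystar (x t) - y t‖ ^ 2 :=
  statement10_general f ℓ μ ηx hℓ hμ hηx Y gx gy hgx hsmooth hconc ystar hystar Φ hΦ x y hxupd
end

section
/- Let f : ℝ^m × ℝ^n → ℝ be ℓ-smooth, f(·,y) L-Lipschitz for all y ∈ Y, f(x,·) concave on convex bounded Y. Let Φ(x) = max_{y∈Y} f(x,y) and Φ_{1/2ℓ} its Moreau envelope. For the GDA x-update x_t = x_{t−1} − η_x ∇_x f(x_{t−1}, y_{t−1}), with Δ_{t−1} = Φ(x_{t−1}) − f(x_{t−1}, y_{t−1}), one has Φ_{1/2ℓ}(x_t) ≤ Φ_{1/2ℓ}(x_{t−1}) + 2η_x ℓ Δ_{t−1} − (η_x/4)‖∇Φ_{1/2ℓ}(x_{t−1})‖² + η_x² ℓ L². -/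
/-!
The envelope at `x₁ = x₀ - ηx • ∇ₓf(x₀, y₀)` is at most the proximal objective of `x₁` evaluated at
the old proximal point `p = prox x₀`, i.e. `Φ p + ℓ‖p - x₁‖²`. Expanding the square leaves
`2ηxℓ⟪∇ₓf, p - x₀⟫ + ηx²ℓ‖∇ₓf‖²`. The inner product is controlled by the descent lemma for the
`ℓ`-Lipschitz gradient, `f(p, y₀) ≤ Φ p` and the optimality `Φ p + ℓ‖p - x₀‖² ≤ Φ x₀` of `p`;
the last term by `‖∇ₓf‖ ≤ L`. For `f(p, y₀) ≤ Φ p` the set `f p '' Y` must be bounded above (else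
`sSup` is junk), which holds because a concave function on a bounded convex set in finite
dimensions is bounded above.
-/

open Set Metric Bornology
open scoped RealInnerProductSpace Topology

section ConcaveBounded

variable {E : Type*} [NormedAddCommGroup E] [NormedSpace ℝ E] [FiniteDimensional ℝ E]
  {s : Set E} {f : E → ℝ}

theorem ConcaveOn.bddAbove_image_of_mem_interior (hf : ConcaveOn ℝ s f) (hs : IsBounded s)
    {q : E} (hq : q ∈ interior s) : BddAbove (f '' s) := by
  have hcont : ContinuousAt f q :=
    hf.continuousOn_interior.continuousAt (isOpen_interior.mem_nhds hq)
  obtain ⟨r, hr, hball⟩ := eventually_nhds_iff_ball.mp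
    (Filter.Eventually.and (mem_interior_iff_mem_nhds.mp hq)
      (hcont.eventually (lt_mem_nhds (sub_one_lt (f q)))))
  obtain ⟨D, hD⟩ := hs.subset_closedBall q
  obtain ⟨t, ht0, htD⟩ : ∃ t > 0, t * D < r :=
    ⟨r / (|D| + 1), by positivity, by
      rw [div_mul_eq_mul_div, div_lt_iff₀ (by positivity)]
      nlinarith [le_abs_self D]⟩
  refine ⟨f q + 1 / t, ?_⟩
  rintro _ ⟨w, hw, rfl⟩
  -- `q` splits the segment from `w` to the point `u` near `q` in the ratio `1 : t`; concavity
  -- then bounds `f w` by `f q` and the lower bound `f q - 1` of `f` near `q`.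
  set u := q + t • (q - w)
  have hu : u ∈ ball q r := by
    have hwq : ‖q - w‖ ≤ D := by rw [← dist_eq_norm']; exact hD hw
    rw [mem_ball, dist_eq_norm, show u - q = t • (q - w) by simp [u], norm_smul,
      Real.norm_of_nonneg ht0.le]
    calc t * ‖q - w‖ ≤ t * D := by gcongr
      _ < r := htD
  obtain ⟨hus, hfu⟩ : u ∈ s ∧ f q - 1 < f u := hball u hu
  have hcomb : (t / (1 + t)) • w + (1 / (1 + t)) • u = q := by
    simp only [u]; match_scalars <;> field_simp; ring
  have hconc : t / (1 + t) * f w + 1 / (1 + t) * f u ≤ f q :=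
    hcomb ▸ hf.2 hw hus (by positivity) (by positivity) (by field_simp; ring)
  have hcross : t * f w + f u ≤ (1 + t) * f q := by
    field_simp at hconc; linarith
  rw [← sub_le_iff_le_add', le_div_iff₀ ht0]
  linarith

theorem ConcaveOn.bddAbove_image_of_isBounded (hf : ConcaveOn ℝ s f) (hs : IsBounded s) :
    BddAbove (f '' s) := by
  rcases s.eq_empty_or_nonempty with rfl | ⟨p, hp⟩
  · simp
  -- Translate `s` by `-p` and work inside the span `V` of the translate, where it has interior.
  set V := Submodule.span ℝ ((p + ·) ⁻¹' s)
  let A : V →ᵃ[ℝ] E := (AffineEquiv.constVAdd ℝ E p).toAffineMap.comp V.subtype.toAffineMap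
  have hA : ∀ v, A v = p + v := fun v => rfl
  have hAiso : Isometry A := Isometry.of_dist_eq fun v w => by simp [hA, dist_eq_norm]
  have hspan : Submodule.span ℝ (A ⁻¹' s) = ⊤ := Submodule.span_span_coe_preimage
  have h0 : (0 : V) ∈ A ⁻¹' s := by simpa [hA] using hp
  have haff : affineSpan ℝ (A ⁻¹' s) = ⊤ := by
    rw [AffineSubspace.affineSpan_eq_top_iff_vectorSpan_eq_top_of_nonempty ℝ V V ⟨0, h0⟩,
      vectorSpan_eq_span_vsub_set_right ℝ h0]
    simpa using hspan
  obtain ⟨q, hq⟩ := ((hf.comp_affineMap A).1.interior_nonempty_iff_affineSpan_eq_top).mpr haff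
  refine ((hf.comp_affineMap A).bddAbove_image_of_mem_interior
    (hAiso.antilipschitz.isBounded_preimage hs) hq).mono ?_
  rintro _ ⟨y, hy, rfl⟩
  exact ⟨⟨y - p, Submodule.subset_span (by simpa using hy)⟩, by simpa [hA] using hy,
    by simp [hA]⟩

end ConcaveBounded

section LipschitzGradient

variable {F : Type*} [NormedAddCommGroup F] [InnerProductSpace ℝ F] [CompleteSpace F]
  {φ : F → ℝ}

theorem HasGradientAt.le_of_lip' {g x : F} (hg : HasGradientAt φ g x) {C : ℝ} (hC₀ : 0 ≤ C)
    (hlip : ∀ᶠ x' in 𝓝 x, ‖φ x' - φ x‖ ≤ C * ‖x' - x‖) : ‖g‖ ≤ C := by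
  simpa using (hasGradientAt_iff_hasFDerivAt.mp hg).le_of_lip' hC₀ hlip

theorem HasGradientAt.hasDerivAt_comp_add_smul_s12 {g x d : F} {t : ℝ}
    (hg : HasGradientAt φ g (x + t • d)) :
    HasDerivAt (fun s : ℝ => φ (x + s • d)) ⟪g, d⟫ t := by
  have hline : HasDerivAt (fun s : ℝ => x + s • d) d t := by
    simpa using ((hasDerivAt_id t).smul_const d).const_add x
  simpa [Function.comp_def] using (hasGradientAt_iff_hasFDerivAt.mp hg).comp_hasDerivAt t hline

theorem quadratic_lower_bound_of_lipschitz_gradient {G : F → F}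
    (hG : ∀ z, HasGradientAt φ (G z) z) {l : ℝ} (hlip : ∀ u v, ‖G u - G v‖ ≤ l * ‖u - v‖)
    (x d : F) : φ x + ⟪G x, d⟫ - l / 2 * ‖d‖ ^ 2 ≤ φ (x + d) := by
  -- The claim is `χ 0 ≤ χ 1`.
  set χ : ℝ → ℝ := fun t => φ (x + t • d) - t * ⟪G x, d⟫ + l / 2 * t ^ 2 * ‖d‖ ^ 2
  have hχ (t : ℝ) : HasDerivAt χ (⟪G (x + t • d) - G x, d⟫ + l * t * ‖d‖ ^ 2) t := by
    have := ((HasGradientAt.hasDerivAt_comp_add_smul_s12 (x := x) (d := d) (t := t) (hG _)).sub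
      ((hasDerivAt_id t).mul_const ⟪G x, d⟫)).add
      (((hasDerivAt_pow 2 t).const_mul (l / 2)).mul_const (‖d‖ ^ 2))
    exact this.congr_deriv (by rw [inner_sub_left]; push_cast; ring)
  have hmono : MonotoneOn χ (Icc 0 1) := by
    refine monotoneOn_of_hasDerivWithinAt_nonneg (convex_Icc 0 1)
      (fun t _ => (hχ t).continuousAt.continuousWithinAt)
      (fun t _ => (hχ t).hasDerivWithinAt) fun t ht => ?_
    rw [interior_Icc] at ht
    have hstep : ‖G (x + t • d) - G x‖ ≤ l * (t * ‖d‖) := by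
      simpa [norm_smul, abs_of_pos ht.1] using hlip (x + t • d) x
    nlinarith [neg_le_of_abs_le (abs_real_inner_le_norm (G (x + t • d) - G x) d),
      mul_le_mul_of_nonneg_right hstep (norm_nonneg d)]
  have h01 := hmono (left_mem_Icc.mpr zero_le_one) (right_mem_Icc.mpr zero_le_one) zero_le_one
  norm_num [χ] at h01
  linarith

end LipschitzGradient

theorem statement12_general {m n : ℕ} (f : EuclideanSpace ℝ (Fin m) → EuclideanSpace ℝ (Fin n) → ℝ)
    (ℓ L ηx : ℝ) (hℓ : 0 < ℓ) (hL : 0 < L) (hηx : 0 < ηx)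
    (Y : Set (EuclideanSpace ℝ (Fin n))) (hYcomp : IsCompact Y)
    (gx : EuclideanSpace ℝ (Fin m) → EuclideanSpace ℝ (Fin n) → EuclideanSpace ℝ (Fin m))
    (hgx : ∀ x y, HasGradientAt (fun x' => f x' y) (gx x y) x)
    (hsmooth : ∀ x x' y y', ‖gx x y - gx x' y'‖ ≤ ℓ * (‖x - x'‖ + ‖y - y'‖))
    (hconc : ∀ x, ConcaveOn ℝ Y (f x))
    (hLip : ∀ y ∈ Y, ∀ x x', |f x y - f x' y| ≤ L * ‖x - x'‖)
    (Φ : EuclideanSpace ℝ (Fin m) → ℝ) (hΦ : ∀ x, Φ x = sSup (f x '' Y))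
    (prox : EuclideanSpace ℝ (Fin m) → EuclideanSpace ℝ (Fin m))
    (hprox : ∀ x, IsMinOn (fun w => Φ w + ℓ * ‖w - x‖ ^ 2) univ (prox x))
    (env : EuclideanSpace ℝ (Fin m) → ℝ)
    (henv : ∀ x, env x = Φ (prox x) + ℓ * ‖prox x - x‖ ^ 2) :
    ∀ x₀, ∀ y₀ ∈ Y,
      env (x₀ - ηx • gx x₀ y₀) ≤ env x₀ + 2 * ηx * ℓ * (Φ x₀ - f x₀ y₀)
        - (ηx / 4) * ‖(2 * ℓ) • (x₀ - prox x₀)‖ ^ 2 + ηx ^ 2 * ℓ * L ^ 2 := by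
  intro x₀ y₀ hy₀
  set p := prox x₀
  set g := gx x₀ y₀
  have hg : ‖g‖ ≤ L :=
    (hgx x₀ y₀).le_of_lip' hL.le (.of_forall fun x => by simpa using hLip y₀ hy₀ x x₀)
  have hdescent : f x₀ y₀ + ⟪g, p - x₀⟫ - ℓ / 2 * ‖p - x₀‖ ^ 2 ≤ f p y₀ := by
    simpa using quadratic_lower_bound_of_lipschitz_gradient (fun z => hgx z y₀)
      (fun u v => by simpa using hsmooth u v y₀ y₀) x₀ (p - x₀)
  have hfΦ : f p y₀ ≤ Φ p := hΦ p ▸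
    le_csSup ((hconc p).bddAbove_image_of_isBounded hYcomp.isBounded) ⟨y₀, hy₀, rfl⟩
  have hprox₀ : Φ p + ℓ * ‖p - x₀‖ ^ 2 ≤ Φ x₀ := by simpa using hprox x₀ (mem_univ x₀)
  have henv₁ : env (x₀ - ηx • g) ≤ Φ p + ℓ * ‖p - (x₀ - ηx • g)‖ ^ 2 :=
    henv _ ▸ hprox (x₀ - ηx • g) (mem_univ p)
  have hexpand : ‖p - (x₀ - ηx • g)‖ ^ 2
      = ‖p - x₀‖ ^ 2 + 2 * ηx * ⟪g, p - x₀⟫ + ηx ^ 2 * ‖g‖ ^ 2 := by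
    rw [show p - (x₀ - ηx • g) = (p - x₀) + ηx • g by abel, norm_add_sq_real,
      real_inner_smul_right, norm_smul, Real.norm_eq_abs, mul_pow, sq_abs, real_inner_comm]
    ring
  have hgrad : ‖(2 * ℓ) • (x₀ - p)‖ ^ 2 = 4 * ℓ ^ 2 * ‖p - x₀‖ ^ 2 := by
    rw [norm_smul, Real.norm_of_nonneg (by positivity), norm_sub_rev]
    ring
  have hinner : ⟪g, p - x₀⟫ ≤ Φ x₀ - f x₀ y₀ - ℓ / 2 * ‖p - x₀‖ ^ 2 := by linarith
  rw [hexpand] at henv₁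
  rw [henv x₀, hgrad]
  linarith [mul_le_mul_of_nonneg_left hinner (by positivity : 0 ≤ 2 * ηx * ℓ),
    mul_le_mul_of_nonneg_left (pow_le_pow_left₀ (norm_nonneg g) hg 2)
      (by positivity : 0 ≤ ηx ^ 2 * ℓ)]

/-- Moreau-envelope descent inequality for the GDA x-update in the
nonconvex-concave setting: with `Δ = Φ(x) − f(x,y)` and
`∇Φ_{1/2ℓ}(x) = 2ℓ(x − prox x)`,
`Φ_{1/2ℓ}(x − η_x∇_x f(x,y)) ≤ Φ_{1/2ℓ}(x) + 2η_x ℓ Δ − (η_x/4)‖∇Φ_{1/2ℓ}(x)‖² + η_x²ℓL²`. -/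
theorem statement12 {m n : ℕ} (f : EuclideanSpace ℝ (Fin m) → EuclideanSpace ℝ (Fin n) → ℝ)
    (ℓ L ηx : ℝ) (hℓ : 0 < ℓ) (hL : 0 < L) (hηx : 0 < ηx)
    (Y : Set (EuclideanSpace ℝ (Fin n))) (hYconv : Convex ℝ Y) (hYcomp : IsCompact Y)
    (hYne : Y.Nonempty)
    (gx : EuclideanSpace ℝ (Fin m) → EuclideanSpace ℝ (Fin n) → EuclideanSpace ℝ (Fin m))
    (hgx : ∀ x y, HasGradientAt (fun x' => f x' y) (gx x y) x)
    (hsmooth : ∀ x x' y y', ‖gx x y - gx x' y'‖ ≤ ℓ * (‖x - x'‖ + ‖y - y'‖))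
    (hconc : ∀ x, ConcaveOn ℝ Y (f x))
    (hLip : ∀ y ∈ Y, ∀ x x', |f x y - f x' y| ≤ L * ‖x - x'‖)
    (Φ : EuclideanSpace ℝ (Fin m) → ℝ) (hΦ : ∀ x, Φ x = sSup (f x '' Y))
    (prox : EuclideanSpace ℝ (Fin m) → EuclideanSpace ℝ (Fin m))
    (hprox : ∀ x, IsMinOn (fun w => Φ w + ℓ * ‖w - x‖ ^ 2) univ (prox x))
    (env : EuclideanSpace ℝ (Fin m) → ℝ)
    (henv : ∀ x, env x = Φ (prox x) + ℓ * ‖prox x - x‖ ^ 2) :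
    ∀ x₀, ∀ y₀ ∈ Y,
      env (x₀ - ηx • gx x₀ y₀) ≤ env x₀ + 2 * ηx * ℓ * (Φ x₀ - f x₀ y₀)
        - (ηx / 4) * ‖(2 * ℓ) • (x₀ - prox x₀)‖ ^ 2 + ηx ^ 2 * ℓ * L ^ 2 :=
  statement12_general f ℓ L ηx hℓ hL hηx Y hYcomp gx hgx hsmooth hconc hLip Φ hΦ prox hprox env henv
end
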